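/- Let V be a finite set of simple uncertain events, let G = (V, E) with E = {(v,w) : v ≺_E w}, and let G' = (V, E') be a directed graph with E' ⊆ E that has the same reachability relation as G. Then two distinct events v, w ∈ V are not connected by any path in G' in either direction if and only if their timestamp intervals share a possible value, i.e., the intersection of the closed intervals [t_min(v), t_max(v)] and [t_min(w), t_max(w)] is nonempty; in that case the two events might have happened in either order. -/
import Mathlib


/-- A simple uncertain event: a timestamp interval `[tmin, tmax]`
drawn from a linearly ordered set of timestamps. -/
structure UEvent (T : Type*) [LinearOrder T] where
  tmin : T
  tmax : T
  hle : tmin ≤ tmax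

/-- The precedence relation `≺_E` on simple uncertain events:
`e ≺_E e'` iff `t_max(e) < t_min(e')`. -/
def UEvent.prec {T : Type*} [LinearOrder T] (e e' : UEvent T) : Prop :=
  e.tmax < e'.tmin

/-- In a graph `G' = (V, E')` with `E' ⊆ E` and the same reachability as the full
precedence graph `G = (V, E)`, two distinct events are not connected by a path in
either direction iff their timestamp intervals share a possible value. -/
theorem unconnected_iff_share_timestamp {T : Type*} [LinearOrder T]
    (V : Finset (UEvent T)) (E E' : UEvent T → UEvent T → Prop)
    (hE : ∀ v w, E v w ↔ v ∈ V ∧ w ∈ V ∧ v.prec w)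
    (hsub : ∀ v w, E' v w → E v w)
    (hreach : ∀ v ∈ V, ∀ w ∈ V, Relation.TransGen E' v w ↔ Relation.TransGen E v w) :
    ∀ v ∈ V, ∀ w ∈ V, v ≠ w →
      ((¬ Relation.TransGen E' v w ∧ ¬ Relation.TransGen E' w v) ↔
        (Set.Icc v.tmin v.tmax ∩ Set.Icc w.tmin w.tmax).Nonempty) := by
  -- E is transitive
  have htrans : Transitive E := by
    intro a b c hab hbc
    rw [hE] at hab hbc ⊢
    exact ⟨hab.1, hbc.2.1, lt_of_lt_of_le hab.2.2 (le_trans b.hle hbc.2.2.le)⟩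
  have hTG : ∀ a b, Relation.TransGen E a b ↔ E a b := by
    intro a b
    constructor
    · intro h; exact Relation.TransGen.trans_induction_on h (fun h => h)
        (fun _ _ h1 h2 => htrans h1 h2)
    · exact Relation.TransGen.single
  intro v hv w hw hvw
  rw [hreach v hv w hw, hreach w hw v hv, hTG, hTG, hE, hE]
  constructor
  · rintro ⟨h1, h2⟩
    have hnvw : ¬ v.prec w := fun h => h1 ⟨hv, hw, h⟩
    have hnwv : ¬ w.prec v := fun h => h2 ⟨hw, hv, h⟩
    simp only [UEvent.prec, not_lt] at hnvw hnwv
    exact ⟨max v.tmin w.tmin, ⟨le_max_left _ _, max_le v.hle hnvw⟩,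
      ⟨le_max_right _ _, max_le hnwv w.hle⟩⟩
  · rintro ⟨t, ⟨hv1, hv2⟩, ⟨hw1, hw2⟩⟩
    constructor
    · rintro ⟨-, -, h⟩; exact absurd h (not_lt.2 (le_trans hw1 hv2))
    · rintro ⟨-, -, h⟩; exact absurd h (not_lt.2 (le_trans hv1 hw2))
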